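/- The generating function of skew Dyck path prefixes of arbitrary endpoint (open ended paths) is S(1) = -((z+1)(z²+3z-2) + (z+2)√(1-6z²+5z⁴)) / (2z(z²+2z-1)), with expansion 1+z+2z²+3z³+7z⁴+11z⁵+26z⁶+43z⁷+102z⁸+175z⁹+416z¹⁰+O(z¹¹). -/

import Mathlib

/-!
A skew Dyck path (a prefix ending on the axis) is empty or factors at its first return to the
axis as `u q x s` with `q`, `s` skew Dyck paths and `x` a down step; a red `x` forces `q ≠ ε`
and `s = ε`. Hence `M = 1 + z²M² + z²(M - 1)` for skew Dyck paths and `T = 1 + z²MT` for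
those not ending in a red step. A prefix ending above the axis factors at its last visit to the
axis as `q u s` with `q` skew Dyck not ending in red and `s` any prefix, so `F = M + zTF`.
The equation for `M` says that `1 - z² - 2z²M` is the square root of `1 - 6z² + 5z⁴`;
eliminating `M` and `T` gives the closed form. The coefficients are counted by enumerating
prefixes step by step.
-/

inductive SkewStep : Type
  | up : SkewStep
  | down : SkewStep
  | red : SkewStep
deriving DecidableEq

def SkewStep.val : SkewStep → ℤ
  | SkewStep.up => 1
  | SkewStep.down => -1
  | SkewStep.red => -1

def SkewStep.ok (a b : SkewStep) : Prop :=
  ¬ (a = SkewStep.up ∧ b = SkewStep.red) ∧ ¬ (a = SkewStep.red ∧ b = SkewStep.up)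

/-- A partial (open ended) skew Dyck path in the decorated model: no forbidden
adjacent pair and every prefix stays weakly above the x-axis; the endpoint is
arbitrary. -/
def IsSkewPrefix (l : List SkewStep) : Prop :=
  l.Chain' SkewStep.ok ∧ ∀ k, 0 ≤ ((l.take k).map SkewStep.val).sum

open PowerSeries Set

section LengthGF

variable {α : Type*}

noncomputable def lengthGF (A : Set (List α)) : ℚ⟦X⟧ :=
  PowerSeries.mk fun n => ({l ∈ A | l.length = n}.ncard : ℚ)

lemma coeff_lengthGF (A : Set (List α)) (n : ℕ) :
    coeff n (lengthGF A) = ({l ∈ A | l.length = n}.ncard : ℚ) :=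
  coeff_mk _ _

lemma lengthGF_singleton_nil : lengthGF {([] : List α)} = 1 := by
  ext (_ | n)
  · simp [coeff_lengthGF]
  · rw [coeff_lengthGF, coeff_one, if_neg n.succ_ne_zero, Nat.cast_eq_zero, ncard_eq_zero]
    exact eq_empty_of_forall_notMem fun l ⟨hnil, hlen⟩ => by subst hnil; simp at hlen

variable [Finite α]

lemma finite_sep_length (A : Set (List α)) (n : ℕ) : {l ∈ A | l.length = n}.Finite :=
  (List.finite_length_eq α n).subset fun _ hl => hl.2

lemma lengthGF_union {A B : Set (List α)} (h : Disjoint A B) :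
    lengthGF (A ∪ B) = lengthGF A + lengthGF B := by
  ext n
  have hsplit : {l ∈ A ∪ B | l.length = n}
      = {l ∈ A | l.length = n} ∪ {l ∈ B | l.length = n} := sep_union
  rw [map_add, coeff_lengthGF, coeff_lengthGF, coeff_lengthGF, hsplit,
    ncard_union_eq (h.mono (sep_subset _ _) (sep_subset _ _)) (finite_sep_length A n)
      (finite_sep_length B n), Nat.cast_add]

lemma lengthGF_diff_nil {A : Set (List α)} (h : [] ∈ A) :
    lengthGF (A \ {[]}) = lengthGF A - 1 := by
  rw [eq_sub_iff_add_eq, ← lengthGF_singleton_nil, ← lengthGF_union disjoint_sdiff_left,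
    sdiff_union_self, union_eq_self_of_subset_right (singleton_subset_iff.2 h)]

lemma ncard_prod_sep_length_add (A B : Set (List α)) (m : ℕ) :
    {p ∈ A ×ˢ B | p.1.length + p.2.length = m}.ncard
      = ∑ ij ∈ Finset.HasAntidiagonal.antidiagonal m,
          {l ∈ A | l.length = ij.1}.ncard * {l ∈ B | l.length = ij.2}.ncard := by
  have hunion : {p ∈ A ×ˢ B | p.1.length + p.2.length = m}
      = ⋃ ij ∈ (Finset.HasAntidiagonal.antidiagonal m : Set (ℕ × ℕ)),
          {l ∈ A | l.length = ij.1} ×ˢ {l ∈ B | l.length = ij.2} := by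
    ext ⟨a, b⟩
    simp only [mem_sep_iff, mem_prod, mem_iUnion, Finset.mem_coe,
      Finset.HasAntidiagonal.mem_antidiagonal, exists_prop, Prod.exists]
    constructor
    · rintro ⟨⟨ha, hb⟩, hab⟩
      exact ⟨_, _, hab, ⟨ha, rfl⟩, hb, rfl⟩
    · rintro ⟨i, j, hij, ⟨ha, rfl⟩, hb, rfl⟩
      exact ⟨⟨ha, hb⟩, hij⟩
  have hdisj : (Finset.HasAntidiagonal.antidiagonal m : Set (ℕ × ℕ)).PairwiseDisjoint fun ij =>
      {l ∈ A | l.length = ij.1} ×ˢ {l ∈ B | l.length = ij.2} := by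
    rintro ⟨i, j⟩ hij ⟨i', j'⟩ hij' hne
    rw [Finset.mem_coe, Finset.HasAntidiagonal.mem_antidiagonal] at hij hij'
    refine disjoint_left.2 fun p hp hp' => hne ?_
    simp only [mem_prod, mem_sep_iff] at hp hp'
    ext <;> simp only <;> omega
  rw [hunion, Set.Finite.ncard_biUnion (Finset.finite_toSet _)
      (fun _ _ => (finite_sep_length A _).prod (finite_sep_length B _)) hdisj,
    finsum_mem_coe_finset]
  simp_rw [ncard_prod]

lemma lengthGF_image2 {A B : Set (List α)} {f : List α → List α → List α} {k : ℕ}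
    (hlen : ∀ a b, (f a b).length = a.length + b.length + k)
    (hinj : InjOn (Function.uncurry f) (A ×ˢ B)) :
    lengthGF (image2 f A B) = X ^ k * (lengthGF A * lengthGF B) := by
  ext n
  have hsep : {l ∈ image2 f A B | l.length = n}
      = Function.uncurry f '' {p ∈ A ×ˢ B | p.1.length + p.2.length + k = n} := by
    rw [← image_uncurry_prod]
    ext l
    simp only [mem_sep_iff, mem_image, Prod.exists, Function.uncurry_apply_pair]
    constructor
    · rintro ⟨⟨a, b, hab, rfl⟩, rfl⟩
      exact ⟨a, b, ⟨hab, (hlen a b).symm⟩, rfl⟩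
    · rintro ⟨a, b, ⟨hab, rfl⟩, rfl⟩
      exact ⟨⟨a, b, hab, rfl⟩, hlen a b⟩
  rw [coeff_lengthGF, hsep, (hinj.mono (sep_subset _ _)).ncard_image, coeff_X_pow_mul', coeff_mul]
  split_ifs with hk
  · obtain ⟨m, rfl⟩ := Nat.exists_eq_add_of_le' hk
    simp_rw [Nat.add_sub_cancel, Nat.add_right_cancel_iff, ncard_prod_sep_length_add,
      coeff_lengthGF]
    push_cast
    rfl
  · have hempty : {p ∈ A ×ˢ B | p.1.length + p.2.length + k = n} = ∅ :=
      eq_empty_of_forall_notMem fun p hp => hk (hp.2 ▸ Nat.le_add_left _ _)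
    rw [hempty, ncard_empty, Nat.cast_zero]

end LengthGF

theorem PowerSeries.eq_of_sq_eq_of_constantCoeff_eq {R : Type*} [CommRing R] [IsDomain R]
    [CharZero R] {A B : R⟦X⟧} (h : A ^ 2 = B ^ 2) (hAB : constantCoeff A = constantCoeff B)
    (hB : constantCoeff B ≠ 0) : A = B := by
  have hsum : A + B ≠ 0 := fun h0 => by
    have := congrArg constantCoeff h0
    rw [map_add, hAB, map_zero, ← two_mul] at this
    exact mul_ne_zero two_ne_zero hB this
  have hprod : (A - B) * (A + B) = 0 := by linear_combination h
  exact sub_eq_zero.1 ((mul_eq_zero.1 hprod).resolve_right hsum)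

namespace SkewStep

instance : Fintype SkewStep :=
  ⟨⟨{up, down, red}, by decide⟩, fun x => by cases x <;> decide⟩

instance : DecidableRel ok := fun a b =>
  inferInstanceAs (Decidable (¬ (a = up ∧ b = red) ∧ ¬ (a = red ∧ b = up)))

lemma val_eq_neg_one {x : SkewStep} (hx : x ≠ up) : x.val = -1 := by
  cases x <;> simp_all [val]

@[simp] lemma val_up : up.val = 1 := rfl

@[simp] lemma ok_down_right (x : SkewStep) : ok x down := by cases x <;> decide

@[simp] lemma ok_right_up_iff (x : SkewStep) : ok x up ↔ x ≠ red := by cases x <;> decide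

@[simp] lemma ok_right_red_iff (x : SkewStep) : ok x red ↔ x ≠ up := by cases x <;> decide

end SkewStep

namespace SkewPath

open SkewStep

def height (l : List SkewStep) : ℤ := (l.map val).sum

@[simp] lemma height_nil : height [] = 0 := rfl

@[simp] lemma height_cons (x : SkewStep) (l : List SkewStep) :
    height (x :: l) = x.val + height l := by
  simp [height]

@[simp] lemma height_append (a b : List SkewStep) : height (a ++ b) = height a + height b := by
  simp [height]

def NonnegFrom (h : ℤ) (l : List SkewStep) : Prop := ∀ k, 0 ≤ h + height (l.take k)

section NonnegFrom

variable {h h' : ℤ} {x : SkewStep} {l a b : List SkewStep}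

@[simp] lemma nonnegFrom_nil : NonnegFrom h [] ↔ 0 ≤ h := by
  simp [NonnegFrom]

lemma NonnegFrom.nonneg (hl : NonnegFrom h l) : 0 ≤ h := by simpa using hl 0

lemma NonnegFrom.nonneg_add_height (hl : NonnegFrom h l) : 0 ≤ h + height l := by
  simpa using hl l.length

lemma NonnegFrom.mono (hle : h ≤ h') (hl : NonnegFrom h l) : NonnegFrom h' l :=
  fun k => (hl k).trans (by omega)

lemma nonnegFrom_cons : NonnegFrom h (x :: l) ↔ 0 ≤ h ∧ NonnegFrom (h + x.val) l := by
  refine ⟨fun hl => ⟨hl.nonneg, fun k => ?_⟩, fun ⟨h0, hl⟩ k => ?_⟩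
  · simpa [add_assoc] using hl (k + 1)
  · cases k with
    | zero => simpa using h0
    | succ k => simpa [add_assoc] using hl k

lemma nonnegFrom_append :
    NonnegFrom h (a ++ b) ↔ NonnegFrom h a ∧ NonnegFrom (h + height a) b := by
  induction a generalizing h with
  | nil => exact ⟨fun hb => ⟨nonnegFrom_nil.2 hb.nonneg, by simpa using hb⟩,
      fun ⟨_, hb⟩ => by simpa using hb⟩
  | cons y a ih =>
    simp only [List.cons_append, nonnegFrom_cons, ih, height_cons, add_assoc, and_assoc]

lemma NonnegFrom.head_eq_up (hl : NonnegFrom 0 l) : ∀ y ∈ l.head?, y = up := by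
  cases l with
  | nil => simp
  | cons y l =>
    rintro _ ⟨⟩
    by_contra hy
    have := (nonnegFrom_cons.1 hl).2.nonneg
    rw [val_eq_neg_one hy] at this
    omega

end NonnegFrom

lemma isSkewPrefix_iff (l : List SkewStep) : IsSkewPrefix l ↔ l.IsChain ok ∧ NonnegFrom 0 l :=
  and_congr Iff.rfl (forall_congr' fun k => by rw [zero_add]; rfl)

section Decomposition

variable {x x' : SkewStep} {l q q' s s' : List SkewStep}

lemma exists_firstPassage {h : ℤ} (h0 : 0 ≤ h) (hl : h + height l < 0) :
    ∃ q x s, l = q ++ x :: s ∧ NonnegFrom h q ∧ h + height q = 0 ∧ x.val = -1 := by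
  induction l generalizing h with
  | nil => rw [height_nil] at hl; omega
  | cons y l ih =>
    by_cases hy : h + y.val < 0
    · have hyup : y ≠ up := by rintro rfl; rw [val_up] at hy; omega
      have hy' := val_eq_neg_one hyup
      exact ⟨[], y, l, rfl, nonnegFrom_nil.2 h0, by rw [height_nil]; omega, hy'⟩
    · obtain ⟨q, x, s, rfl, hq, hq0, hx⟩ := ih (not_lt.1 hy) (by simpa [add_assoc] using hl)
      exact ⟨y :: q, x, s, rfl, nonnegFrom_cons.2 ⟨h0, hq⟩, by rw [height_cons]; omega, hx⟩

lemma not_nonnegFrom_append_cons {h : ℤ} (hx : h + height q + x.val < 0) :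
    ¬ NonnegFrom h (q ++ x :: s) := fun hl => by
  have := ((nonnegFrom_append.1 hl).2 |> nonnegFrom_cons.1).2.nonneg
  omega

lemma eq_of_append_cons_eq_of_firstPassage (hq : NonnegFrom 0 q) (hq' : NonnegFrom 0 q')
    (hx : height q + x.val < 0) (hx' : height q' + x'.val < 0)
    (h : q ++ x :: s = q' ++ x' :: s') : q = q' ∧ x = x' ∧ s = s' := by
  rcases List.append_eq_append_iff.1 h with
    ⟨_ | ⟨y, t⟩, rfl, ht⟩ | ⟨_ | ⟨y, t⟩, rfl, ht⟩
  · simp_all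
  · obtain ⟨rfl, -⟩ := List.cons_eq_cons.1 ht
    exact absurd hq' (not_nonnegFrom_append_cons (by simpa using hx))
  · simp_all
  · obtain ⟨rfl, -⟩ := List.cons_eq_cons.1 ht
    exact absurd hq (not_nonnegFrom_append_cons (by simpa using hx'))

lemma exists_lastVisit (hl : NonnegFrom 0 l) (hpos : 0 < height l) :
    ∃ q s, l = q ++ up :: s ∧ height q = 0 ∧ NonnegFrom 0 s := by
  induction l using List.reverseRecOn with
  | nil => simp at hpos
  | append_singleton l y ih =>
    obtain ⟨hl', hy⟩ := nonnegFrom_append.1 hl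
    have hy : 0 ≤ height l + y.val := by simpa using (nonnegFrom_cons.1 hy).2
    have hpos : 0 < height l + y.val := by simpa using hpos
    rcases hl'.nonneg_add_height.eq_or_lt with h0 | h0
    · have : y = up := by
        by_contra hne
        rw [val_eq_neg_one hne] at hpos
        omega
      exact ⟨l, [], by rw [this], by omega, nonnegFrom_nil.2 le_rfl⟩
    · obtain ⟨q, s, rfl, hq, hs⟩ := ih hl' (by omega)
      refine ⟨q, s ++ [y], by simp, hq, nonnegFrom_append.2 ⟨hs, ?_⟩⟩
      simp only [height_append, height_cons, val_up, hq] at hpos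
      simp only [nonnegFrom_cons, nonnegFrom_nil]
      have := hs.nonneg_add_height
      omega

lemma eq_of_append_up_eq_of_lastVisit (hq : height q = 0) (hq' : height q' = 0)
    (hs : NonnegFrom 0 s) (hs' : NonnegFrom 0 s')
    (h : q ++ up :: s = q' ++ up :: s') : q = q' ∧ s = s' := by
  rcases List.append_eq_append_iff.1 h with
    ⟨_ | ⟨y, t⟩, rfl, ht⟩ | ⟨_ | ⟨y, t⟩, rfl, ht⟩
  · simp_all
  · obtain ⟨rfl, rfl⟩ := List.cons_eq_cons.1 ht
    have := (nonnegFrom_append.1 hs).1.nonneg_add_height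
    simp only [height_append, height_cons, val_up] at hq'
    omega
  · simp_all
  · obtain ⟨rfl, rfl⟩ := List.cons_eq_cons.1 ht
    have := (nonnegFrom_append.1 hs').1.nonneg_add_height
    simp only [height_append, height_cons, val_up] at hq
    omega

end Decomposition

def skewDyck : Set (List SkewStep) := {l | IsSkewPrefix l ∧ height l = 0}

def skewDyckNotEndingRed : Set (List SkewStep) := {l ∈ skewDyck | l.getLast? ≠ some red}

def skewPrefixes : Set (List SkewStep) := {l | IsSkewPrefix l}

def arch (x : SkewStep) (q s : List SkewStep) : List SkewStep := up :: (q ++ x :: s)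

section SkewDyck

variable {x x' : SkewStep} {l q q' s s' : List SkewStep}

lemma mem_skewDyck_iff : l ∈ skewDyck ↔ l.IsChain ok ∧ NonnegFrom 0 l ∧ height l = 0 := by
  rw [skewDyck, mem_ofPred_eq, isSkewPrefix_iff, and_assoc]

lemma nil_mem_skewDyck : [] ∈ skewDyck := mem_skewDyck_iff.2 (by simp)

lemma getLast?_ne_up_of_mem_skewDyck (hl : l ∈ skewDyck) : ∀ z ∈ l.getLast?, z ≠ up := by
  obtain ⟨-, hNN, h0⟩ := mem_skewDyck_iff.1 hl
  rcases l.eq_nil_or_concat' with rfl | ⟨l, z, rfl⟩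
  · simp
  · intro z' hz
    obtain rfl : z = z' := by simpa using hz
    rintro rfl
    have := (nonnegFrom_append.1 hNN).1.nonneg_add_height
    simp only [height_append, height_cons, val_up, height_nil, add_zero] at h0
    omega

lemma height_arch (hx : x ≠ up) : height (arch x q s) = height q + height s := by
  simp only [arch, height_cons, height_append, val_up, val_eq_neg_one hx]
  ring

lemma arch_mem_skewDyck_iff (hx : x ≠ up) (hq : q ∈ skewDyck) (hs : s ∈ skewDyck) :
    arch x q s ∈ skewDyck ↔ (x = red → q ≠ [] ∧ s = []) := by
  have hqlast := getLast?_ne_up_of_mem_skewDyck hq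
  obtain ⟨hqc, hqNN, hq0⟩ := mem_skewDyck_iff.1 hq
  obtain ⟨hsc, hsNN, hs0⟩ := mem_skewDyck_iff.1 hs
  have hNN : NonnegFrom 0 (arch x q s) := by
    simp only [arch, nonnegFrom_cons, nonnegFrom_append, hq0, val_eq_neg_one hx, val_up]
    exact ⟨le_rfl, hqNN.mono zero_le_one, by norm_num, by simpa using hsNN⟩
  rw [mem_skewDyck_iff, height_arch hx, hq0, hs0]
  simp only [hNN]
  simp only [arch, List.isChain_cons, List.isChain_append, hqc, hsc, true_and]
  have hqhead := hqNN.head_eq_up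
  have hshead := hsNN.head_eq_up
  -- `q` and `s` start with `u` and `q` ends with a down step, so only a red `x` can meet a
  -- forbidden pair: `u r` when `q = []`, and `r u` when `s ≠ []`.
  cases x <;> rcases q with _ | ⟨a, q⟩ <;> rcases s with _ | ⟨b, s⟩ <;> simp_all

lemma exists_arch_of_mem_skewDyck (hl : l ∈ skewDyck) (hne : l ≠ []) :
    ∃ x q s, x ≠ up ∧ q ∈ skewDyck ∧ s ∈ skewDyck ∧ l = arch x q s := by
  obtain ⟨hc, hNN, h0⟩ := mem_skewDyck_iff.1 hl
  obtain ⟨y, m, rfl⟩ := List.exists_cons_of_ne_nil hne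
  obtain rfl : y = up := hNN.head_eq_up y rfl
  obtain ⟨q, x, s, rfl, hq, hq0, hx⟩ :=
    exists_firstPassage (h := 0) (l := m) le_rfl (by rw [height_cons, val_up] at h0; omega)
  have hxup : x ≠ up := by rintro rfl; simp at hx
  simp only [nonnegFrom_cons, nonnegFrom_append, val_up, hx] at hNN
  simp only [height_cons, height_append, val_up, hx] at h0
  have hc' := (List.isChain_cons.1 hc).2
  refine ⟨x, q, s, hxup, mem_skewDyck_iff.2 ⟨hc'.left_of_append, hq, by omega⟩,
    mem_skewDyck_iff.2 ⟨(List.isChain_cons.1 hc'.right_of_append).2, ?_, by omega⟩, rfl⟩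
  have hq0' : height q = 0 := by simpa using hq0
  simpa [hq0'] using hNN.2.2.2

lemma arch_inj (hx : x ≠ up) (hx' : x' ≠ up) (hq : q ∈ skewDyck) (hq' : q' ∈ skewDyck)
    (h : arch x q s = arch x' q' s') : x = x' ∧ q = q' ∧ s = s' := by
  obtain ⟨-, hqNN, hq0⟩ := mem_skewDyck_iff.1 hq
  obtain ⟨-, hq'NN, hq'0⟩ := mem_skewDyck_iff.1 hq'
  obtain ⟨h1, h2, h3⟩ := eq_of_append_cons_eq_of_firstPassage hqNN hq'NN
    (by rw [hq0, val_eq_neg_one hx]; norm_num) (by rw [hq'0, val_eq_neg_one hx']; norm_num)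
    (List.cons_injective h)
  exact ⟨h2, h1, h3⟩

lemma injOn_arch {A B : Set (List SkewStep)} (hx : x ≠ up) (hA : A ⊆ skewDyck) :
    InjOn (Function.uncurry (arch x)) (A ×ˢ B) := by
  rintro ⟨q, s⟩ ⟨hq, -⟩ ⟨q', s'⟩ ⟨hq', -⟩ h
  obtain ⟨-, rfl, rfl⟩ := arch_inj hx hx (hA hq) (hA hq') h
  rfl

lemma nil_notMem_image2_arch {A B : Set (List SkewStep)} : [] ∉ image2 (arch x) A B := by
  rintro ⟨_, _, _, _, ⟨⟩⟩

theorem skewDyck_eq : skewDyck = {[]} ∪ image2 (arch down) skewDyck skewDyck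
    ∪ image2 (arch red) (skewDyck \ {[]}) {[]} := by
  ext l
  constructor
  · intro hl
    by_cases hne : l = []
    · exact Or.inl (Or.inl hne)
    obtain ⟨x, q, s, hx, hq, hs, rfl⟩ := exists_arch_of_mem_skewDyck hl hne
    have hxs := (arch_mem_skewDyck_iff hx hq hs).1 hl
    cases x
    · exact absurd rfl hx
    · exact Or.inl (Or.inr ⟨q, hq, s, hs, rfl⟩)
    · obtain ⟨hqne, rfl⟩ := hxs rfl
      exact Or.inr ⟨q, ⟨hq, hqne⟩, [], rfl, rfl⟩
  · rintro ((rfl | ⟨q, hq, s, hs, rfl⟩) | ⟨q, ⟨hq, hqne⟩, s, rfl, rfl⟩)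
    · exact nil_mem_skewDyck
    · exact (arch_mem_skewDyck_iff (by decide) hq hs).2 (by simp)
    · exact (arch_mem_skewDyck_iff (by decide) hq nil_mem_skewDyck).2 fun _ => ⟨hqne, rfl⟩

lemma getLast?_arch : (arch x q s).getLast? = (x :: s).getLast? := by
  rw [arch, ← List.cons_append, List.getLast?_append_cons]

lemma getLast?_arch_ne_red_iff :
    (arch down q s).getLast? ≠ some red ↔ s.getLast? ≠ some red := by
  rw [getLast?_arch]
  cases s <;> simp

theorem skewDyckNotEndingRed_eq :
    skewDyckNotEndingRed = {[]} ∪ image2 (arch down) skewDyck skewDyckNotEndingRed := by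
  ext l
  constructor
  · rintro ⟨hl, hlast⟩
    by_cases hne : l = []
    · exact Or.inl hne
    obtain ⟨x, q, s, hx, hq, hs, rfl⟩ := exists_arch_of_mem_skewDyck hl hne
    have hxs := (arch_mem_skewDyck_iff hx hq hs).1 hl
    cases x
    · exact absurd rfl hx
    · exact Or.inr ⟨q, hq, s, ⟨hs, getLast?_arch_ne_red_iff.1 hlast⟩, rfl⟩
    · obtain ⟨-, rfl⟩ := hxs rfl
      simp [getLast?_arch] at hlast
  · rintro (rfl | ⟨q, hq, s, ⟨hs, hslast⟩, rfl⟩)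
    · exact ⟨nil_mem_skewDyck, by simp⟩
    · exact ⟨(arch_mem_skewDyck_iff (by decide) hq hs).2 (by simp),
        getLast?_arch_ne_red_iff.2 hslast⟩

lemma append_up_mem_skewPrefixes_iff (hq : q ∈ skewDyck) (hs : s ∈ skewPrefixes) :
    q ++ up :: s ∈ skewPrefixes ↔ q.getLast? ≠ some red := by
  obtain ⟨hqc, hqNN, hq0⟩ := mem_skewDyck_iff.1 hq
  obtain ⟨hsc, hsNN⟩ := (isSkewPrefix_iff s).1 hs
  have hNN : NonnegFrom 0 (q ++ up :: s) := by
    simp only [nonnegFrom_append, nonnegFrom_cons, hq0, val_up]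
    exact ⟨hqNN, le_rfl, hsNN.mono zero_le_one⟩
  have hshead := hsNN.head_eq_up
  simp only [skewPrefixes, mem_ofPred_eq, isSkewPrefix_iff, hNN, and_true,
    List.isChain_append, List.isChain_cons, hqc, hsc, true_and]
  constructor
  · intro h hred
    simpa using h.2 red hred
  · intro h
    refine ⟨fun y hy => by simp [hshead y hy], fun z hz y hy => ?_⟩
    obtain rfl : y = up := by simpa using hy.symm
    exact (ok_right_up_iff z).2 (by rintro rfl; exact h hz)

theorem skewPrefixes_eq : skewPrefixes
    = skewDyck ∪ image2 (fun q s => q ++ up :: s) skewDyckNotEndingRed skewPrefixes := by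
  ext l
  constructor
  · intro hl
    obtain ⟨hc, hNN⟩ := (isSkewPrefix_iff l).1 hl
    rcases hNN.nonneg_add_height.eq_or_lt with h0 | hpos
    · exact Or.inl ⟨hl, by omega⟩
    obtain ⟨q, s, rfl, hq0, hsNN⟩ := exists_lastVisit hNN (by omega)
    have hq : q ∈ skewDyck :=
      mem_skewDyck_iff.2 ⟨hc.left_of_append, (nonnegFrom_append.1 hNN).1, hq0⟩
    have hs : s ∈ skewPrefixes :=
      (isSkewPrefix_iff s).2 ⟨(List.isChain_cons.1 hc.right_of_append).2, hsNN⟩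
    exact Or.inr ⟨q, ⟨hq, (append_up_mem_skewPrefixes_iff hq hs).1 hl⟩, s, hs, rfl⟩
  · rintro (hl | ⟨q, ⟨hq, hqlast⟩, s, hs, rfl⟩)
    · exact hl.1
    · exact (append_up_mem_skewPrefixes_iff hq hs).2 hqlast

end SkewDyck

lemma length_arch (x : SkewStep) (q s : List SkewStep) :
    (arch x q s).length = q.length + s.length + 2 := by
  simp only [arch, List.length_cons, List.length_append]
  omega

lemma disjoint_image2_arch_down_red {A B C D : Set (List SkewStep)} (hA : A ⊆ skewDyck)
    (hC : C ⊆ skewDyck) : Disjoint (image2 (arch down) A B) (image2 (arch red) C D) := by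
  rw [disjoint_left]
  rintro _ ⟨q, hq, s, -, rfl⟩ ⟨q', hq', s', -, h⟩
  exact absurd (arch_inj (by decide) (by decide) (hC hq') (hA hq) h).1 (by decide)

theorem lengthGF_skewDyck : lengthGF skewDyck
    = 1 + X ^ 2 * (lengthGF skewDyck * lengthGF skewDyck) + X ^ 2 * (lengthGF skewDyck - 1) := by
  conv_lhs => rw [skewDyck_eq]
  rw [lengthGF_union, lengthGF_union, lengthGF_singleton_nil,
    lengthGF_image2 (length_arch down) (injOn_arch (by decide) subset_rfl),
    lengthGF_image2 (length_arch red) (injOn_arch (by decide) sdiff_subset),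
    lengthGF_diff_nil nil_mem_skewDyck, lengthGF_singleton_nil, mul_one]
  · exact disjoint_singleton_left.2 nil_notMem_image2_arch
  · exact disjoint_union_left.2 ⟨disjoint_singleton_left.2 nil_notMem_image2_arch,
      disjoint_image2_arch_down_red subset_rfl sdiff_subset⟩

theorem lengthGF_skewDyckNotEndingRed : lengthGF skewDyckNotEndingRed
    = 1 + X ^ 2 * (lengthGF skewDyck * lengthGF skewDyckNotEndingRed) := by
  conv_lhs => rw [skewDyckNotEndingRed_eq]
  rw [lengthGF_union (disjoint_singleton_left.2 nil_notMem_image2_arch),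
    lengthGF_singleton_nil,
    lengthGF_image2 (length_arch down) (injOn_arch (by decide) subset_rfl)]

theorem lengthGF_skewPrefixes : lengthGF skewPrefixes
    = lengthGF skewDyck + X * (lengthGF skewDyckNotEndingRed * lengthGF skewPrefixes) := by
  conv_lhs => rw [skewPrefixes_eq]
  rw [lengthGF_union, lengthGF_image2 (k := 1)
    (fun q s => by simp only [List.length_append, List.length_cons]; omega), pow_one]
  · rintro ⟨q, s⟩ ⟨hq, hs⟩ ⟨q', s'⟩ ⟨hq', hs'⟩ h
    obtain ⟨rfl, rfl⟩ := eq_of_append_up_eq_of_lastVisit (mem_skewDyck_iff.1 hq.1).2.2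
      (mem_skewDyck_iff.1 hq'.1).2.2 ((isSkewPrefix_iff s).1 hs).2
      ((isSkewPrefix_iff s').1 hs').2 h
    rfl
  · rw [disjoint_left]
    rintro _ hl ⟨q, hq, s, hs, rfl⟩
    have := ((isSkewPrefix_iff s).1 hs).2.nonneg_add_height
    have := (mem_skewDyck_iff.1 hl).2.2
    simp only [height_append, (mem_skewDyck_iff.1 hq.1).2.2, height_cons, val_up] at this
    omega

theorem lengthGF_skewPrefixes_closedForm (W : ℚ⟦X⟧)
    (hW : W ^ 2 = 1 - 6 * X ^ 2 + 5 * X ^ 4) (hW0 : coeff 0 W = 1) :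
    lengthGF skewPrefixes * (2 * X * (X ^ 2 + 2 * X - 1))
      = -((X + 1) * (X ^ 2 + 3 * X - 2) + (X + 2) * W) := by
  have hM := lengthGF_skewDyck
  have hT := lengthGF_skewDyckNotEndingRed
  have hF := lengthGF_skewPrefixes
  set M := lengthGF skewDyck
  set F := lengthGF skewPrefixes
  have hW0' : constantCoeff W = 1 := by rw [← coeff_zero_eq_constantCoeff_apply, hW0]
  have hWM : W = 1 - X ^ 2 - 2 * X ^ 2 * M := by
    refine PowerSeries.eq_of_sq_eq_of_constantCoeff_eq ?_ ?_ ?_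
    · rw [hW]
      linear_combination (4 * X ^ 2 : ℚ⟦X⟧) * hM
    · simp [hW0']
    · simp
  have hFD : F * ((1 - X) ^ 2 + W) = 3 - 3 * X ^ 2 - W := by
    linear_combination (2 * (1 - X ^ 2 * M)) * hF + (2 * X * F) * hT + 2 * hM + (F + 1) * hWM
  have hD : (1 - X) ^ 2 + W ≠ 0 := fun h => by
    have := congrArg constantCoeff h
    norm_num [hW0'] at this
  refine mul_right_cancel₀ hD ?_
  linear_combination (2 * X * (X ^ 2 + 2 * X - 1)) * hFD + (X + 2) * hW

def CanExtend (l : List SkewStep) (x : SkewStep) : Prop :=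
  (∀ y ∈ l.getLast?, ok y x) ∧ 0 ≤ height l + x.val

instance (l : List SkewStep) : DecidablePred (CanExtend l) := fun x =>
  inferInstanceAs (Decidable ((∀ y ∈ l.getLast?, ok y x) ∧ 0 ≤ height l + x.val))

lemma isSkewPrefix_append_singleton {l : List SkewStep} {x : SkewStep} :
    IsSkewPrefix (l ++ [x]) ↔ IsSkewPrefix l ∧ CanExtend l x := by
  simp only [isSkewPrefix_iff, CanExtend, List.isChain_append, List.isChain_singleton,
    nonnegFrom_append, nonnegFrom_cons, nonnegFrom_nil, List.head?_cons, Option.mem_def,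
    Option.some.injEq, forall_eq', zero_add, true_and]
  constructor
  · rintro ⟨⟨hc, hx⟩, hl, -, hlx⟩
    exact ⟨⟨hc, hl⟩, hx, hlx⟩
  · rintro ⟨⟨hc, hl⟩, hx, hlx⟩
    exact ⟨⟨hc, hx⟩, hl, hl.nonneg_add_height.trans_eq (zero_add _), hlx⟩

def skewPrefixList : ℕ → List (List SkewStep)
  | 0 => [[]]
  | n + 1 => (skewPrefixList n).flatMap fun l =>
      ([up, down, red].filter (CanExtend l)).map (l ++ [·])

lemma mem_skewPrefixList {n : ℕ} {l : List SkewStep} :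
    l ∈ skewPrefixList n ↔ l.length = n ∧ IsSkewPrefix l := by
  induction n generalizing l with
  | zero =>
    simp only [skewPrefixList, List.mem_singleton, List.length_eq_zero_iff, iff_self_and]
    rintro rfl
    exact (isSkewPrefix_iff []).2 (by simp)
  | succ n ih =>
    simp only [skewPrefixList, List.mem_flatMap, List.mem_map, List.mem_filter, ih]
    constructor
    · rintro ⟨l', ⟨rfl, hl'⟩, x, ⟨-, hx⟩, rfl⟩
      exact ⟨by simp, isSkewPrefix_append_singleton.2 ⟨hl', by simpa using hx⟩⟩
    · rintro ⟨hlen, hl⟩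
      obtain ⟨l', x, rfl⟩ := (l.eq_nil_or_concat').resolve_left (by rintro rfl; simp at hlen)
      obtain ⟨hl', hx⟩ := isSkewPrefix_append_singleton.1 hl
      exact ⟨l', ⟨by simpa using hlen, hl'⟩, x,
        ⟨by cases x <;> simp, by simpa using hx⟩, rfl⟩

lemma nodup_skewPrefixList (n : ℕ) : (skewPrefixList n).Nodup := by
  induction n with
  | zero => simp [skewPrefixList]
  | succ n ih =>
    refine List.nodup_flatMap.2 ⟨fun l _ => ?_, ih.pairwise_of_forall_ne fun l _ l' _ hne => ?_⟩
    · exact ((List.nodup_cons.2 ⟨by decide, by decide⟩).filter _).map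
        fun _ _ h => by simpa using h
    · simp only [Function.onFun, List.disjoint_left, List.mem_map]
      rintro _ ⟨x, -, rfl⟩ ⟨x', -, h⟩
      exact hne (List.append_inj' h rfl).1.symm

lemma ncard_skewPrefixes_length (n : ℕ) :
    {l ∈ skewPrefixes | l.length = n}.ncard = (skewPrefixList n).length := by
  rw [← List.toFinset_card_of_nodup (nodup_skewPrefixList n), ← ncard_coe_finset]
  congr 1
  ext l
  simp [mem_skewPrefixList, skewPrefixes, and_comm]

end SkewPath

/-- The generating function of open ended (partial) skew Dyck paths is
`S(1) = -((z+1)(z²+3z-2)+(z+2)√(1-6z²+5z⁴))/(2z(z²+2z-1))`, with expansion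
`1+z+2z²+3z³+7z⁴+11z⁵+26z⁶+43z⁷+102z⁸+175z⁹+416z¹⁰+⋯`. -/
theorem openEnded_genFun (S1 W : PowerSeries ℚ)
    (hS1 : ∀ n : ℕ, PowerSeries.coeff n S1
        = Nat.card {l : List SkewStep // l.length = n ∧ IsSkewPrefix l})
    (hW : W ^ 2 = 1 - 6 * PowerSeries.X ^ 2 + 5 * PowerSeries.X ^ 4)
    (hW0 : PowerSeries.coeff 0 W = 1) :
    S1 * (2 * PowerSeries.X * (PowerSeries.X ^ 2 + 2 * PowerSeries.X - 1))
      = -((PowerSeries.X + 1) * (PowerSeries.X ^ 2 + 3 * PowerSeries.X - 2)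
          + (PowerSeries.X + 2) * W) ∧
    PowerSeries.coeff 0 S1 = 1 ∧ PowerSeries.coeff 1 S1 = 1 ∧
    PowerSeries.coeff 2 S1 = 2 ∧ PowerSeries.coeff 3 S1 = 3 ∧
    PowerSeries.coeff 4 S1 = 7 ∧ PowerSeries.coeff 5 S1 = 11 ∧
    PowerSeries.coeff 6 S1 = 26 ∧ PowerSeries.coeff 7 S1 = 43 ∧
    PowerSeries.coeff 8 S1 = 102 ∧ PowerSeries.coeff 9 S1 = 175 ∧
    PowerSeries.coeff 10 S1 = 416 := by
  have hcoeff (n : ℕ) : coeff n S1 = (SkewPath.skewPrefixList n).length := by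
    rw [hS1, ← SkewPath.ncard_skewPrefixes_length, ← Nat.card_coe_set_eq]
    exact congrArg Nat.cast (Nat.card_congr
      (Equiv.subtypeEquivRight (α := List SkewStep) fun _ => and_comm))
  have hS1F : S1 = lengthGF SkewPath.skewPrefixes := by
    ext n
    rw [hcoeff, coeff_lengthGF, SkewPath.ncard_skewPrefixes_length]
  refine ⟨hS1F ▸ SkewPath.lengthGF_skewPrefixes_closedForm W hW hW0, ?_⟩
  simp only [hcoeff]
  decide +kernel
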